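/- Fix Δx > 0, k ∈ ℕ, cells C_j = [jΔx, (j+1)Δx), the piecewise polynomial space V and its orthogonal projection P in L²(ℝ). Let s ∈ ℝ and set m = ⌊s/Δx⌋. If f, g ∈ L²(ℝ) agree almost everywhere on C_{j−m−1} ∪ C_{j−m}, then P(τ_s f) = P(τ_s g) almost everywhere on C_j. In other words, the sLdG update on a given cell depends only on the data in two adjacent upwind cells. -/

import Mathlib

/-!
The projection `P` onto piecewise polynomials is local: `V` is stable under truncation to a
cell, so testing `w - P w ⊥ V` against the truncation of `P w` to `C_j` shows that `P w`
vanishes on `C_j` whenever `w` does. A shift by `s`, with `m = ⌊s/Δx⌋`, moves `C_j` into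
`C_{j-m-1} ∪ C_{j-m}`, so `τ_s f` and `τ_s g` agree on `C_j`, and locality of `P` concludes.
-/
open MeasureTheory
open scoped InnerProductSpace

section Locality

variable {α 𝕜 E : Type*} [MeasurableSpace α] {μ : Measure α} [RCLike 𝕜]
  [NormedAddCommGroup E] [InnerProductSpace 𝕜 E] {S : Set α}

theorem L2.inner_eq_zero_of_ae_eq_zero_restrict_compl (hS : MeasurableSet S) {a b : Lp E 2 μ}
    (ha : (a : α → E) =ᵐ[μ.restrict S] 0) (hb : (b : α → E) =ᵐ[μ.restrict Sᶜ] 0) :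
    ⟪a, b⟫_𝕜 = 0 := by
  rw [L2.inner_def]
  refine integral_eq_zero_of_ae ?_
  filter_upwards [(ae_restrict_iff' hS).1 ha, (ae_restrict_iff' hS.compl).1 hb] with x hxa hxb
  by_cases hx : x ∈ S
  · simp [hxa hx]
  · simp [hxb hx]

variable (V : Submodule 𝕜 (Lp E 2 μ)) [V.HasOrthogonalProjection]

theorem Submodule.starProjection_ae_eq_zero_restrict (hS : MeasurableSet S)
    (hV : ∀ v ∈ V, ∃ v' ∈ V, (v' : α → E) =ᵐ[μ] S.indicator v) {w : Lp E 2 μ}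
    (hw : (w : α → E) =ᵐ[μ.restrict S] 0) :
    (V.starProjection w : α → E) =ᵐ[μ.restrict S] 0 := by
  set u := V.starProjection w
  obtain ⟨v, hvV, hv⟩ := hV u (V.starProjection_apply_mem w)
  have hv_compl : (v : α → E) =ᵐ[μ.restrict Sᶜ] 0 :=
    hv.restrict.trans (indicator_ae_eq_restrict_compl hS)
  have hwv : ⟪w, v⟫_𝕜 = 0 := L2.inner_eq_zero_of_ae_eq_zero_restrict_compl hS hw hv_compl
  have huv : ⟪u - v, v⟫_𝕜 = 0 := by
    refine L2.inner_eq_zero_of_ae_eq_zero_restrict_compl hS ?_ hv_compl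
    filter_upwards [ae_restrict_of_ae (Lp.coeFn_sub u v), ae_restrict_of_ae hv,
      indicator_ae_eq_restrict (f := (u : α → E)) hS] with x h1 h2 h3
    rw [h1, Pi.sub_apply, h2, h3, sub_self, Pi.zero_apply]
  have hv_zero : v = 0 := by
    rw [← inner_self_eq_zero (𝕜 := 𝕜)]
    calc ⟪v, v⟫_𝕜 = ⟪w, v⟫_𝕜 - ⟪u - v, v⟫_𝕜 - ⟪w - u, v⟫_𝕜 := by
          simp only [inner_sub_left]; ring
      _ = 0 := by rw [hwv, huv, V.starProjection_inner_eq_zero w v hvV]; simp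
  rw [ae_eq_restrict_iff_indicator_ae_eq hS, Set.indicator_zero']
  rw [hv_zero] at hv
  exact hv.symm.trans (Lp.coeFn_zero E 2 μ)

theorem Submodule.starProjection_ae_eq_restrict (hS : MeasurableSet S)
    (hV : ∀ v ∈ V, ∃ v' ∈ V, (v' : α → E) =ᵐ[μ] S.indicator v) {w₁ w₂ : Lp E 2 μ}
    (hw : (w₁ : α → E) =ᵐ[μ.restrict S] w₂) :
    (V.starProjection w₁ : α → E) =ᵐ[μ.restrict S] V.starProjection w₂ := by
  have hsub : ((w₁ - w₂ : Lp E 2 μ) : α → E) =ᵐ[μ.restrict S] 0 := by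
    filter_upwards [ae_restrict_of_ae (Lp.coeFn_sub w₁ w₂), hw] with x h1 h2
    rw [h1, Pi.sub_apply, h2, sub_self, Pi.zero_apply]
  have h := V.starProjection_ae_eq_zero_restrict hS hV hsub
  rw [map_sub] at h
  filter_upwards [ae_restrict_of_ae (Lp.coeFn_sub (V.starProjection w₁) (V.starProjection w₂)), h]
    with x h1 h2
  rw [← sub_eq_zero, ← Pi.sub_apply, ← h1, h2, Pi.zero_apply]

end Locality

theorem ae_eq_restrict_preimage_comp_sub {G β : Type*} [MeasurableSpace G] [AddGroup G]
    [MeasurableAdd G] {μ : Measure G} [μ.IsAddRightInvariant] {f g : G → β} {U : Set G}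
    (hU : MeasurableSet U) (s : G) (h : f =ᵐ[μ.restrict U] g) :
    (fun x => f (x - s)) =ᵐ[μ.restrict ((· - s) ⁻¹' U)] fun x => g (x - s) :=
  ((measurePreserving_sub_right μ s).restrict_preimage hU).quasiMeasurePreserving.ae_eq_comp h

def cell (Δx : ℝ) (j : ℤ) : Set ℝ := Set.Ico (j * Δx) ((j + 1) * Δx)

theorem mem_cell_iff_floor_div_eq {Δx x : ℝ} (hΔx : 0 < Δx) {j : ℤ} :
    x ∈ cell Δx j ↔ ⌊x / Δx⌋ = j := by
  rw [cell, Set.mem_Ico, Int.floor_eq_iff, le_div_iff₀ hΔx, div_lt_iff₀ hΔx]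

theorem sub_mem_cell_union {Δx x : ℝ} (hΔx : 0 < Δx) {j : ℤ} (hx : x ∈ cell Δx j) (s : ℝ) :
    x - s ∈ cell Δx (j - ⌊s / Δx⌋ - 1) ∪ cell Δx (j - ⌊s / Δx⌋) := by
  rw [mem_cell_iff_floor_div_eq hΔx] at hx
  simp only [Set.mem_union, mem_cell_iff_floor_div_eq hΔx]
  have hxj := Int.floor_eq_iff.1 hx
  have hs₁ := Int.floor_le (s / Δx)
  have hs₂ := Int.lt_floor_add_one (s / Δx)
  have hlo : j - ⌊s / Δx⌋ - 1 ≤ ⌊(x - s) / Δx⌋ := by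
    rw [Int.le_floor, sub_div]; push_cast; linarith
  have hhi : ⌊(x - s) / Δx⌋ < j - ⌊s / Δx⌋ + 1 := by
    rw [Int.floor_lt, sub_div]; push_cast; linarith
  omega

def IsPiecewisePoly (Δx : ℝ) (k : ℕ) (f : ℝ → ℝ) : Prop :=
  ∀ j : ℤ, ∃ p : Polynomial ℝ, p.degree ≤ k ∧
    f =ᵐ[volume.restrict (cell Δx j)] fun x => p.eval x

namespace IsPiecewisePoly

variable {Δx : ℝ} {k : ℕ} {f g : ℝ → ℝ}

theorem congr_ae (hf : IsPiecewisePoly Δx k f) (hfg : f =ᵐ[volume] g) :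
    IsPiecewisePoly Δx k g := fun j => by
  obtain ⟨p, hp, hfp⟩ := hf j
  exact ⟨p, hp, hfg.restrict.symm.trans hfp⟩

theorem indicator_cell (hΔx : 0 < Δx) (hf : IsPiecewisePoly Δx k f) (i : ℤ) :
    IsPiecewisePoly Δx k ((cell Δx i).indicator f) := fun j => by
  by_cases hji : j = i
  · subst hji
    obtain ⟨p, hp, hfp⟩ := hf j
    exact ⟨p, hp, (indicator_ae_eq_restrict measurableSet_Ico).trans hfp⟩
  · refine ⟨0, by simp, Filter.eventuallyEq_of_mem (self_mem_ae_restrict measurableSet_Ico) ?_⟩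
    intro x hx
    rw [mem_cell_iff_floor_div_eq hΔx] at hx
    rw [Set.indicator_of_notMem (by rw [mem_cell_iff_floor_div_eq hΔx]; omega)]
    exact Polynomial.eval_zero.symm

end IsPiecewisePoly

theorem exists_mem_ae_eq_indicator_cell {Δx : ℝ} (hΔx : 0 < Δx) {k : ℕ}
    {V : Submodule ℝ (Lp ℝ 2 (volume : Measure ℝ))}
    (hV : ∀ f : Lp ℝ 2 (volume : Measure ℝ), f ∈ V ↔ IsPiecewisePoly Δx k f) (i : ℤ) :
    ∀ v ∈ V, ∃ v' ∈ V, (v' : ℝ → ℝ) =ᵐ[volume] (cell Δx i).indicator v := by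
  intro v hv
  have hmem : MemLp ((cell Δx i).indicator v) 2 volume := (Lp.memLp v).indicator measurableSet_Ico
  refine ⟨hmem.toLp, (hV _).2 ?_, hmem.coeFn_toLp⟩
  exact (((hV v).1 hv).indicator_cell hΔx i).congr_ae hmem.coeFn_toLp.symm

/-- The sLdG update `f ↦ P(τ_s f)` on a given cell `C_j` depends only on the data in the
two adjacent upwind cells `C_{j-m-1}` and `C_{j-m}`, where `m = ⌊s/Δx⌋`: if `f = g` a.e.
on `C_{j-m-1} ∪ C_{j-m}`, then `P(τ_s f) = P(τ_s g)` a.e. on `C_j`. -/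
theorem stmt_8 (Δx : ℝ) (hΔx : 0 < Δx) (k : ℕ)
    (V : Submodule ℝ (Lp ℝ 2 (volume : Measure ℝ))) [Submodule.HasOrthogonalProjection V]
    (hV : ∀ f : Lp ℝ 2 (volume : Measure ℝ),
      f ∈ V ↔ ∀ j : ℤ, ∃ p : Polynomial ℝ, p.degree ≤ (k : ℕ) ∧
        (f : ℝ → ℝ) =ᵐ[volume.restrict (Set.Ico (j * Δx) ((j + 1) * Δx))]
          fun x => p.eval x)
    (s : ℝ) (m : ℤ) (hm : m = ⌊s / Δx⌋)
    (f g : Lp ℝ 2 (volume : Measure ℝ)) (j : ℤ)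
    (hfg : (f : ℝ → ℝ)
      =ᵐ[volume.restrict (Set.Ico ((j - m - 1 : ℤ) * Δx) (((j - m - 1 : ℤ) + 1) * Δx) ∪
          Set.Ico ((j - m : ℤ) * Δx) (((j - m : ℤ) + 1) * Δx))] (g : ℝ → ℝ))
    (fs gs : Lp ℝ 2 (volume : Measure ℝ))
    (hfs : (fs : ℝ → ℝ) =ᵐ[(volume : Measure ℝ)] fun x => f (x - s))
    (hgs : (gs : ℝ → ℝ) =ᵐ[(volume : Measure ℝ)] fun x => g (x - s)) :
    ((Submodule.orthogonalProjectionOnto V fs : Lp ℝ 2 (volume : Measure ℝ)) : ℝ → ℝ)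
      =ᵐ[volume.restrict (Set.Ico (j * Δx) ((j + 1) * Δx))]
    ((Submodule.orthogonalProjectionOnto V gs : Lp ℝ 2 (volume : Measure ℝ)) : ℝ → ℝ) := by
  have hshift : (fun x => f (x - s)) =ᵐ[volume.restrict (cell Δx j)] fun x => g (x - s) :=
    ae_restrict_of_ae_restrict_of_subset (fun x hx => hm ▸ sub_mem_cell_union hΔx hx s)
      (ae_eq_restrict_preimage_comp_sub (measurableSet_Ico.union measurableSet_Ico) s hfg)
  have hfsgs : (fs : ℝ → ℝ) =ᵐ[volume.restrict (cell Δx j)] gs :=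
    hfs.restrict.trans (hshift.trans hgs.restrict.symm)
  exact V.starProjection_ae_eq_restrict measurableSet_Ico
    (exists_mem_ae_eq_indicator_cell hΔx hV j) hfsgs
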